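/- arXiv:2306.05028 — 2 statements merged into one kernel-verified Lean document; each statement's English description precedes it below -/
import Mathlib

section
/- Let b ∈ (0,1)^n be a belief profile and let (s^A, s^B) with price p ∈ (0,1) be a naive competitive equilibrium for b. Then the number of agents i with b_i ≥ p is at least n·p, and the number of agents i with b_i ≤ p is at least n·(1−p). Thus the naive equilibrium price p is the (1−p)-quantile of the belief profile. -/
/-- `(sA, sB)` together with price `p` is a naive competitive equilibrium for
the belief profile `b`. -/
def NaiveEquilibrium (n : ℕ) (b sA sB : Fin n → ℝ) (p : ℝ) : Prop :=
  p ∈ Set.Ioo (0 : ℝ) 1 ∧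
  (∀ i, sA i ∈ Set.Icc (0 : ℝ) 1 ∧ sB i ∈ Set.Icc (0 : ℝ) 1 ∧ sA i * sB i = 0) ∧
  (1 / p) * (∑ i, sA i) = (1 / (1 - p)) * (∑ i, sB i) ∧
  (∀ i, b i > p → sA i = 1 ∧ sB i = 0) ∧
  (∀ i, b i < p → sA i = 0 ∧ sB i = 1)

/-!
Write `N` for the number of agents with `p ≤ bᵢ`. Only those agents buy `A`, each at most one
unit, so `∑ sᴬ ≤ N`; the other `n - N` agents all buy one unit of `B`, so `n - N ≤ ∑ sᴮ`. The
clearing condition `(1 - p) ∑ sᴬ = p ∑ sᴮ` then gives `(1 - p) N ≥ p (n - N)`, i.e. `N ≥ n p`.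
The second bound is the first one for the mirrored market `(1 - b, sᴮ, sᴬ, 1 - p)`.
-/

open Finset

section Counting

variable {ι : Type*} [Fintype ι] (f : ι → ℝ) (P : ι → Prop) [DecidablePred P]

theorem sum_le_card_filter (h_le_one : ∀ i, f i ≤ 1) (h_zero : ∀ i, ¬ P i → f i = 0) :
    ∑ i, f i ≤ #(univ.filter P) := by
  calc ∑ i, f i ≤ ∑ i, if P i then (1 : ℝ) else 0 :=
        sum_le_sum fun i _ => by split_ifs with h <;> simp [h_le_one, h_zero, h]
    _ = #(univ.filter P) := by rw [sum_boole]

theorem card_filter_le_sum (h_nonneg : ∀ i, 0 ≤ f i) (h_one : ∀ i, P i → f i = 1) :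
    (#(univ.filter P) : ℝ) ≤ ∑ i, f i := by
  calc (#(univ.filter P) : ℝ) = ∑ i, if P i then (1 : ℝ) else 0 := by rw [sum_boole]
    _ ≤ ∑ i, f i :=
        sum_le_sum fun i _ => by split_ifs with h <;> simp [h_nonneg, h_one, h]

end Counting

namespace NaiveEquilibrium

variable {n : ℕ} {b sA sB : Fin n → ℝ} {p : ℝ}

theorem clearing (h : NaiveEquilibrium n b sA sB p) :
    (1 - p) * ∑ i, sA i = p * ∑ i, sB i := by
  obtain ⟨⟨hp0, hp1⟩, -, hclear, -⟩ := h
  have : 1 - p ≠ 0 := by linarith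
  field_simp at hclear
  linarith

theorem swap (h : NaiveEquilibrium n b sA sB p) :
    NaiveEquilibrium n (1 - b) sB sA (1 - p) := by
  obtain ⟨⟨hp0, hp1⟩, hbox, hclear, hA, hB⟩ := h
  refine ⟨⟨by linarith, by linarith⟩, fun i => ?_, ?_, fun i hi => ?_, fun i hi => ?_⟩
  · obtain ⟨hAi, hBi, hprod⟩ := hbox i
    exact ⟨hBi, hAi, by rw [mul_comm, hprod]⟩
  · rw [sub_sub_cancel, hclear]
  · exact (hB i (by simp only [Pi.sub_apply, Pi.one_apply] at hi; linarith)).symm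
  · exact (hA i (by simp only [Pi.sub_apply, Pi.one_apply] at hi; linarith)).symm

theorem mul_price_le_card_filter_price_le (h : NaiveEquilibrium n b sA sB p) :
    (n : ℝ) * p ≤ #(univ.filter fun i => p ≤ b i) := by
  have hclear := h.clearing
  obtain ⟨⟨hp0, hp1⟩, hbox, -, -, hB⟩ := h
  set N := #(univ.filter fun i => p ≤ b i)
  have hsA : ∑ i, sA i ≤ N :=
    sum_le_card_filter sA _ (fun i => (hbox i).1.2) fun i hi => (hB i (not_le.mp hi)).1
  have hsB : (n : ℝ) - N ≤ ∑ i, sB i := by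
    have hsplit : N + #(univ.filter fun i => ¬ p ≤ b i) = n := by
      rw [card_filter_add_card_filter_not, card_univ, Fintype.card_fin]
    have hsplit_real : (n : ℝ) = N + #(univ.filter fun i => ¬ p ≤ b i) := by
      exact_mod_cast hsplit.symm
    have hbuyers := card_filter_le_sum sB (fun i => ¬ p ≤ b i) (fun i => (hbox i).2.1.1)
      fun i hi => (hB i (not_le.mp hi)).2
    linarith
  have : p * (n - N) ≤ (1 - p) * N :=
    calc p * (n - N) ≤ p * ∑ i, sB i := mul_le_mul_of_nonneg_left hsB hp0.le
      _ = (1 - p) * ∑ i, sA i := hclear.symm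
      _ ≤ (1 - p) * N := mul_le_mul_of_nonneg_left hsA (sub_nonneg.mpr hp1.le)
  linarith

end NaiveEquilibrium

theorem naive_equilibrium_price_quantile_general (n : ℕ) (b sA sB : Fin n → ℝ) (p : ℝ)
    (heq : NaiveEquilibrium n b sA sB p) :
    (n : ℝ) * p ≤ ((Finset.univ.filter fun i => p ≤ b i).card : ℝ) ∧
    (n : ℝ) * (1 - p) ≤ ((Finset.univ.filter fun i => b i ≤ p).card : ℝ) := by
  refine ⟨heq.mul_price_le_card_filter_price_le, ?_⟩
  have hmirror := heq.swap.mul_price_le_card_filter_price_le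
  simpa only [Pi.sub_apply, Pi.one_apply, sub_le_sub_iff_left] using hmirror

/-- The naive equilibrium price is the `(1-p)`-quantile of the belief profile:
at least `n·p` agents have belief `≥ p` and at least `n·(1-p)` agents have
belief `≤ p`. -/
theorem naive_equilibrium_price_quantile (n : ℕ) (b sA sB : Fin n → ℝ) (p : ℝ)
    (hb : ∀ i, b i ∈ Set.Ioo (0 : ℝ) 1)
    (heq : NaiveEquilibrium n b sA sB p) :
    (n : ℝ) * p ≤ ((Finset.univ.filter fun i => p ≤ b i).card : ℝ) ∧
    (n : ℝ) * (1 - p) ≤ ((Finset.univ.filter fun i => b i ≤ p).card : ℝ) :=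
  naive_equilibrium_price_quantile_general n b sA sB p heq
end

section
/- Let q ∈ (1/2, 1)^n. For a weight vector w ∈ ℝ^n, define the accuracy Q(w) = (1/2)·∑_{v ∈ {0,1}^n} [ P_A(v)·g_w(v) + P_B(v)·(1 − g_w(v)) ], where P_A(v) = ∏_{i=1}^n q_i^{v_i}(1−q_i)^{1−v_i} and P_B(v) = ∏_{i=1}^n q_i^{1−v_i}(1−q_i)^{v_i} are the probabilities of the vote profile v conditional on the true state being A and B respectively, and g_w(v) equals 1 if ∑_i w_i v_i > (1/2)∑_i w_i, equals 1/2 if ∑_i w_i v_i = (1/2)∑_i w_i, and equals 0 otherwise. Then the weight vector w* with w*_i = ln(q_i/(1−q_i)) maximizes Q: for every w ∈ ℝ^n, Q(w*) ≥ Q(w). -/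
/-!
Conditional on a vote profile `v`, electing `A` is correct with weight `P_A(v)` and electing `B`
with weight `P_B(v)`, so any rule, mixing the two with some `g ∈ [0, 1]`, scores at most
`max (P_A v) (P_B v)` on `v`. With the log-odds weights the weighted margin is exactly
`(log P_A(v) - log P_B(v)) / 2`, so that rule elects the likelier state on every profile and
attains this bound termwise.
-/

open Finset

/-- Probability of the vote profile `v` conditional on the true state being `A`. -/
noncomputable def probA (n : ℕ) (q : Fin n → ℝ) (v : Fin n → Bool) : ℝ :=
  ∏ i, if v i then q i else 1 - q i

/-- Probability of the vote profile `v` conditional on the true state being `B`. -/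
noncomputable def probB (n : ℕ) (q : Fin n → ℝ) (v : Fin n → Bool) : ℝ :=
  ∏ i, if v i then 1 - q i else q i

/-- Outcome of weighted majority with weights `w` on the vote profile `v`:
`1` if `A` wins, `1/2` on a tie, `0` if `B` wins. -/
noncomputable def wmaj (n : ℕ) (w : Fin n → ℝ) (v : Fin n → Bool) : ℝ :=
  if (∑ i, w i * (if v i then 1 else 0)) > (1 / 2) * ∑ i, w i then 1
  else if (∑ i, w i * (if v i then 1 else 0)) = (1 / 2) * ∑ i, w i then 1 / 2
  else 0

/-- Truth-tracking accuracy of weighted majority with weights `w`, under the uniform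
prior on the two states. -/
noncomputable def accuracy (n : ℕ) (q : Fin n → ℝ) (w : Fin n → ℝ) : ℝ :=
  (1 / 2) * ∑ v : Fin n → Bool,
    (probA n q v * wmaj n w v + probB n q v * (1 - wmaj n w v))

noncomputable def margin (n : ℕ) (w : Fin n → ℝ) (v : Fin n → Bool) : ℝ :=
  ∑ i, w i * (if v i then 1 else 0) - 1 / 2 * ∑ i, w i

noncomputable def logOdds {n : ℕ} (q : Fin n → ℝ) : Fin n → ℝ :=
  fun i => Real.log (q i / (1 - q i))

lemma mul_add_mul_one_sub_le_max (a b : ℝ) {g : ℝ} (hg : g ∈ Set.Icc (0 : ℝ) 1) :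
    a * g + b * (1 - g) ≤ max a b :=
  calc a * g + b * (1 - g) ≤ max a b * g + max a b * (1 - g) := by
        gcongr
        · exact hg.1
        · exact le_max_left a b
        · linarith [hg.2]
        · exact le_max_right a b
    _ = max a b := by ring

section WeightedMajority

variable {n : ℕ}

lemma wmaj_mem_Icc (w : Fin n → ℝ) (v : Fin n → Bool) : wmaj n w v ∈ Set.Icc (0 : ℝ) 1 := by
  unfold wmaj
  split_ifs <;> norm_num

lemma wmaj_eq_one_of_margin_pos {w : Fin n → ℝ} {v : Fin n → Bool} (h : 0 < margin n w v) :
    wmaj n w v = 1 := by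
  unfold margin at h
  rw [wmaj, if_pos (by linarith)]

lemma wmaj_eq_zero_of_margin_neg {w : Fin n → ℝ} {v : Fin n → Bool} (h : margin n w v < 0) :
    wmaj n w v = 0 := by
  unfold margin at h
  rw [wmaj, if_neg (by linarith), if_neg (by linarith)]

end WeightedMajority

section VoteProfiles

variable {n : ℕ} {q : Fin n → ℝ}

lemma probA_pos (hq : ∀ i, q i ∈ Set.Ioo (0 : ℝ) 1) (v : Fin n → Bool) : 0 < probA n q v :=
  prod_pos fun i _ => by
    obtain ⟨h0, h1⟩ := hq i
    split <;> linarith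

lemma probB_pos (hq : ∀ i, q i ∈ Set.Ioo (0 : ℝ) 1) (v : Fin n → Bool) : 0 < probB n q v :=
  prod_pos fun i _ => by
    obtain ⟨h0, h1⟩ := hq i
    split <;> linarith

lemma log_probA_sub_log_probB (hq : ∀ i, q i ∈ Set.Ioo (0 : ℝ) 1) (v : Fin n → Bool) :
    Real.log (probA n q v) - Real.log (probB n q v) = 2 * margin n (logOdds q) v := by
  have hpos : ∀ i, 0 < q i ∧ 0 < 1 - q i := fun i => ⟨(hq i).1, by linarith [(hq i).2]⟩
  have hfactor_ne : ∀ i (p : Prop) [Decidable p], (if p then q i else 1 - q i) ≠ 0 ∧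
      (if p then 1 - q i else q i) ≠ 0 := fun i p _ => by
    obtain ⟨h0, h1⟩ := hpos i
    constructor <;> split <;> positivity
  rw [probA, probB, Real.log_prod fun i _ => (hfactor_ne i _).1,
    Real.log_prod fun i _ => (hfactor_ne i _).2, margin, ← sum_sub_distrib, mul_sub,
    mul_sum, mul_sum, mul_sum, ← sum_sub_distrib]
  refine sum_congr rfl fun i _ => ?_
  rw [logOdds, Real.log_div (hpos i).1.ne' (hpos i).2.ne']
  split <;> ring

lemma probA_mul_wmaj_logOdds_add_eq_max (hq : ∀ i, q i ∈ Set.Ioo (0 : ℝ) 1) (v : Fin n → Bool) :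
    probA n q v * wmaj n (logOdds q) v + probB n q v * (1 - wmaj n (logOdds q) v)
      = max (probA n q v) (probB n q v) := by
  have hlog := log_probA_sub_log_probB hq v
  rcases lt_trichotomy (probA n q v) (probB n q v) with hlt | heq | hgt
  · have hmargin : margin n (logOdds q) v < 0 := by
      linarith [Real.log_lt_log (probA_pos hq v) hlt]
    rw [wmaj_eq_zero_of_margin_neg hmargin, max_eq_right hlt.le]
    ring
  · rw [heq, max_self]
    ring
  · have hmargin : 0 < margin n (logOdds q) v := by
      linarith [Real.log_lt_log (probB_pos hq v) hgt]
    rw [wmaj_eq_one_of_margin_pos hmargin, max_eq_left hgt.le]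
    ring

end VoteProfiles

/-- Weighted majority with the log-odds weights `ln(q i / (1 - q i))` maximizes the
truth-tracking accuracy (Grofman–Owen–Feld / Nitzan–Paroush). -/
theorem log_odds_weights_optimal (n : ℕ) (q : Fin n → ℝ)
    (hq : ∀ i, q i ∈ Set.Ioo (1 / 2 : ℝ) 1) (w : Fin n → ℝ) :
    accuracy n q w ≤ accuracy n q (fun i => Real.log (q i / (1 - q i))) := by
  have hq' : ∀ i, q i ∈ Set.Ioo (0 : ℝ) 1 := fun i => ⟨by linarith [(hq i).1], (hq i).2⟩
  unfold accuracy
  refine mul_le_mul_of_nonneg_left (sum_le_sum fun v _ => ?_) (by norm_num)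
  rw [show (fun i => Real.log (q i / (1 - q i))) = logOdds q from rfl,
    probA_mul_wmaj_logOdds_add_eq_max hq']
  exact mul_add_mul_one_sub_le_max _ _ (wmaj_mem_Icc w v)
end
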